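/- With the same distribution (x uniform on Z_3^K, (y,z) as in the three-function expansion lemma), for any g : Z_3^L → ℂ with |g| = 1 everywhere: E[g(y)·conj(g(z))] = Σ_{α : |α[i]| ≡ 0 mod 3 for all i ∈ [K]} ĝ(α)·conj(ĝ(−α))·(−1/2)^{#α}, where α[i] denotes the block of α corresponding to π^{-1}(i) and |α[i]| is the sum of its entries mod 3. -/

import Mathlib

open Finset

noncomputable def ω : ℂ := Complex.exp (2 * Real.pi * Complex.I / 3)

/-- Fourier coefficient of `f : Z_3^ι → ℂ` at `α`: `E_x[f(x) · conj(ω^{α·x})]`. -/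
noncomputable def fhat {ι : Type*} [Fintype ι] [DecidableEq ι] (f : (ι → ZMod 3) → ℂ)
    (α : ι → ZMod 3) : ℂ :=
  (∑ x : ι → ZMod 3, f x * (starRingEnd ℂ) (ω ^ (∑ i, α i * x i).val)) /
    (Fintype.card (ι → ZMod 3) : ℂ)

/-- The projection `π₃(α) ∈ Z_3^K`, whose `i`-th coordinate is the sum of block `i` of `α`. -/
def pi3 {K d : ℕ} (α : Fin K × Fin d → ZMod 3) : Fin K → ZMod 3 :=
  fun i => ∑ j, α (i, j)

/-- `#α`: number of nonzero coordinates of `α`. -/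
def nsupp {ι : Type*} [Fintype ι] (α : ι → ZMod 3) : ℕ :=
  (univ.filter (fun i => α i ≠ 0)).card

/-- The test distribution's joint pmf: `x` uniform on `Z_3^K`, and independently per coordinate
`(i,j)`, `(y_{ij}, z_{ij})` uniform over the six pairs with `y_{ij} + z_{ij} ≠ 2·x_i`,
i.e. the pairs `(a,a+1),(a,a+2),(a+1,a),(a+1,a+1),(a+2,a),(a+2,a+2)` for `a = x_i`. -/
noncomputable def wt {K d : ℕ} (x : Fin K → ZMod 3) (y z : Fin K × Fin d → ZMod 3) : ℝ :=
  (1 / 3 ^ K) * ∏ p : Fin K × Fin d, (if y p + z p = 2 * x p.1 then (0 : ℝ) else 1/6)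

/-!
Expanding both coefficients, `ĝ(α) · conj ĝ(-α) = N⁻² ∑_{y,z} g(y) conj g(z) ω^{-α·(y+z)}`, so it
suffices to compare, for each `(y, z)`, the total weight `∑ₓ wt x y z` with
`N⁻² ∑_α ω^{-α·(y+z)} (-1/2)^{#α}` over the admissible `α`. Detecting the block conditions
`∑ⱼ α(i,j) = 0` with characters `τ ∈ Z_3^K` makes the `α`-sum factor over coordinates, and
`∑_b ω^{b u} · (1 if b = 0 else -1/2) = (3/2) · [u ≠ 0]`; the resulting
`∑_τ ∏_p (3/2) [y_p + z_p ≠ τ_{p.1}]` is the weight of the test distribution after `τ = 2x`.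
-/

open ZMod Matrix

lemma AddChar.map_sum_eq_prod {ι A M : Type*} [AddCommMonoid A] [CommMonoid M] (ψ : AddChar A M)
    (s : Finset ι) (f : ι → A) : ψ (∑ i ∈ s, f i) = ∏ i ∈ s, ψ (f i) := by
  induction s using Finset.cons_induction with
  | empty => simp
  | cons a s ha ih => rw [Finset.sum_cons, Finset.prod_cons, AddChar.map_add_eq_mul, ih]

lemma omega_pow_val (a : ZMod 3) : ω ^ a.val = stdAddChar a := by
  rw [stdAddChar_apply, toCircle_apply, ω, ← Complex.exp_nat_mul]
  congr 1
  push_cast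
  ring

lemma conj_stdAddChar (a : ZMod 3) : starRingEnd ℂ (stdAddChar a) = stdAddChar (-a) := by
  rw [AddChar.starComp_apply (by rw [ringChar_zmod_n]; norm_num), AddChar.inv_apply]

lemma sum_stdAddChar_mul (u : ZMod 3) :
    ∑ b : ZMod 3, stdAddChar (b * u) = if u = 0 then (3 : ℂ) else 0 := by
  rw [AddChar.sum_mulShift _ (isPrimitive_stdAddChar 3)]
  simp

lemma sum_stdAddChar_mul_mul_ite (u : ZMod 3) :
    ∑ b : ZMod 3, stdAddChar (b * u) * (if b = 0 then 1 else -(1 : ℂ) / 2)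
      = if u = 0 then 0 else 3 / 2 := by
  have hm : ∀ b : ZMod 3, (if b = 0 then 1 else -(1 : ℂ) / 2)
      = -1 / 2 + 3 / 2 * if b = 0 then 1 else 0 := by
    intro b; split_ifs <;> norm_num
  simp only [hm, mul_add, Finset.sum_add_distrib, ← Finset.sum_mul, sum_stdAddChar_mul, mul_ite,
    mul_zero, mul_one, Finset.sum_ite_eq', Finset.mem_univ, if_true, zero_mul, AddChar.map_zero_eq_one]
  split_ifs <;> norm_num

section Fourier

variable {ι : Type*} [Fintype ι] [DecidableEq ι]

lemma fhat_eq_sum (f : (ι → ZMod 3) → ℂ) (α : ι → ZMod 3) :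
    fhat f α = (∑ x, f x * stdAddChar (-(α ⬝ᵥ x))) / Fintype.card (ι → ZMod 3) := by
  simp only [fhat, omega_pow_val, conj_stdAddChar]
  rfl

lemma fhat_mul_conj_fhat_neg (f : (ι → ZMod 3) → ℂ) (α : ι → ZMod 3) :
    fhat f α * starRingEnd ℂ (fhat f (-α))
      = (∑ y, ∑ z, f y * starRingEnd ℂ (f z) * stdAddChar (-(α ⬝ᵥ (y + z))))
          / (Fintype.card (ι → ZMod 3) : ℂ) ^ 2 := by
  rw [fhat_eq_sum, fhat_eq_sum, map_div₀, map_natCast, div_mul_div_comm, sq, map_sum,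
    Finset.sum_mul_sum]
  congr 1
  refine Finset.sum_congr rfl fun y _ => Finset.sum_congr rfl fun z _ => ?_
  rw [map_mul, conj_stdAddChar, neg_dotProduct, neg_neg, dotProduct_add, neg_add,
    AddChar.map_add_eq_mul]
  ring

end Fourier

lemma pow_nsupp {ι M : Type*} [Fintype ι] [CommMonoid M] (c : M) (α : ι → ZMod 3) :
    c ^ nsupp α = ∏ p, if α p = 0 then 1 else c := by
  rw [nsupp, ← Finset.prod_const, Finset.prod_filter]
  simp only [ite_not]


section Blocks

variable {ι κ : Type*} [Fintype ι] [Fintype κ]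

lemma stdAddChar_mul_pow_nsupp (τ : ι → ZMod 3) (α s : ι × κ → ZMod 3) :
    stdAddChar (∑ p, τ p.1 * α p) * (stdAddChar (-(α ⬝ᵥ s)) * (-(1 : ℂ) / 2) ^ nsupp α)
      = ∏ p, stdAddChar (α p * (τ p.1 - s p)) * (if α p = 0 then 1 else -(1 : ℂ) / 2) := by
  rw [pow_nsupp, ← mul_assoc, ← AddChar.map_add_eq_mul, dotProduct, ← Finset.sum_neg_distrib,
    ← Finset.sum_add_distrib, AddChar.map_sum_eq_prod, ← Finset.prod_mul_distrib]
  refine Finset.prod_congr rfl fun p _ => ?_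
  ring_nf

variable [DecidableEq ι]

lemma ite_forall_blockSum_eq_zero (α : ι × κ → ZMod 3) [Decidable (∀ i, ∑ j, α (i, j) = 0)] :
    (if ∀ i, ∑ j, α (i, j) = 0 then (1 : ℂ) else 0)
      = (1 / 3) ^ Fintype.card ι * ∑ τ : ι → ZMod 3, stdAddChar (∑ p, τ p.1 * α p) := by
  have hcoord : ∀ u : ZMod 3, (if u = 0 then (1 : ℂ) else 0) = 1 / 3 * ∑ b, stdAddChar (b * u) := by
    intro u; rw [sum_stdAddChar_mul]; split_ifs <;> norm_num
  have hprod : (if ∀ i, ∑ j, α (i, j) = 0 then (1 : ℂ) else 0)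
      = ∏ i, if ∑ j, α (i, j) = 0 then (1 : ℂ) else 0 := by
    simp [Finset.prod_boole]
  rw [hprod, Finset.prod_congr rfl fun i _ => hcoord _, Finset.prod_mul_distrib, Finset.prod_const,
    Finset.card_univ, Fintype.prod_sum]
  congr 1
  refine Finset.sum_congr rfl fun τ _ => ?_
  rw [Fintype.sum_prod_type, AddChar.map_sum_eq_prod]
  simp only [Finset.mul_sum]

variable [DecidableEq κ]

lemma sum_filter_blockSum_eq_zero (s : ι × κ → ZMod 3)
    [DecidablePred fun α : ι × κ → ZMod 3 => ∀ i, ∑ j, α (i, j) = 0] :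
    ∑ α ∈ univ.filter (fun α : ι × κ → ZMod 3 => ∀ i, ∑ j, α (i, j) = 0),
        stdAddChar (-(α ⬝ᵥ s)) * (-(1 : ℂ) / 2) ^ nsupp α
      = (1 / 3) ^ Fintype.card ι * ∑ τ : ι → ZMod 3, ∏ p, if s p = τ p.1 then 0 else 3 / 2 := by
  calc _ = ∑ α : ι × κ → ZMod 3, (1 / 3) ^ Fintype.card ι * ∑ τ : ι → ZMod 3,
        stdAddChar (∑ p, τ p.1 * α p) * (stdAddChar (-(α ⬝ᵥ s)) * (-(1 : ℂ) / 2) ^ nsupp α) := by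
        rw [Finset.sum_filter]
        refine Finset.sum_congr rfl fun α _ => ?_
        rw [← boole_mul, ite_forall_blockSum_eq_zero, mul_assoc, Finset.sum_mul]
    _ = (1 / 3) ^ Fintype.card ι * ∑ τ : ι → ZMod 3, ∏ p,
        ∑ b : ZMod 3, stdAddChar (b * (τ p.1 - s p)) * (if b = 0 then 1 else -(1 : ℂ) / 2) := by
        simp only [← Finset.mul_sum, stdAddChar_mul_pow_nsupp, Fintype.prod_sum]
        rw [Finset.sum_comm]
    _ = _ := by
        simp only [sum_stdAddChar_mul_mul_ite, sub_eq_zero, eq_comm]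

end Blocks

lemma sum_wt (K d : ℕ) (y z : Fin K × Fin d → ZMod 3) :
    ∑ x : Fin K → ZMod 3, (wt x y z : ℂ)
      = (∑ α ∈ univ.filter (fun α : Fin K × Fin d → ZMod 3 => ∀ i, ∑ j, α (i, j) = 0),
          stdAddChar (-(α ⬝ᵥ (y + z))) * (-(1 : ℂ) / 2) ^ nsupp α)
        / (Fintype.card (Fin K × Fin d → ZMod 3) : ℂ) ^ 2 := by
  have hcard : (Fintype.card (Fin K × Fin d → ZMod 3) : ℂ) ^ 2 = ∏ _p : Fin K × Fin d, 9 := by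
    rw [Finset.prod_const, Finset.card_univ, Fintype.card_fun, ZMod.card, Fintype.card_prod]
    push_cast
    rw [← pow_mul, mul_comm, pow_mul]
    norm_num
  calc ∑ x : Fin K → ZMod 3, (wt x y z : ℂ)
      = ∑ τ : Fin K → ZMod 3, (1 / 3) ^ K * ∏ p, if (y + z) p = τ p.1 then 0 else 1 / 6 := by
        refine Fintype.sum_equiv (Equiv.neg _) _ _ fun x => ?_
        simp [wt, show (2 : ZMod 3) = -1 by decide, apply_ite (fun r : ℝ => (r : ℂ))]
    -- dividing each factor `3 / 2` by `9` gives the weight `1 / 6` of `wt`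
    _ = _ := by
        rw [sum_filter_blockSum_eq_zero, Fintype.card_fin, mul_div_assoc, Finset.sum_div, hcard,
          ← Finset.mul_sum]
        congr 1
        refine Finset.sum_congr rfl fun τ _ => ?_
        rw [← Finset.prod_div_distrib]
        refine Finset.prod_congr rfl fun p _ => ?_
        split_ifs <;> norm_num

theorem stmt9_general (K d : ℕ)
    (g : (Fin K × Fin d → ZMod 3) → ℂ) :
    ∑ x : Fin K → ZMod 3, ∑ y : Fin K × Fin d → ZMod 3, ∑ z : Fin K × Fin d → ZMod 3,
        (wt x y z : ℂ) * g y * (starRingEnd ℂ) (g z)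
      = ∑ α ∈ univ.filter (fun α : Fin K × Fin d → ZMod 3 => ∀ i, (∑ j, α (i, j)) = 0),
          fhat g α * (starRingEnd ℂ) (fhat g (-α)) * (-(1 : ℂ)/2) ^ nsupp α := by
  calc _ = ∑ y, ∑ z, g y * starRingEnd ℂ (g z) * ∑ x : Fin K → ZMod 3, (wt x y z : ℂ) := by
        simp only [Finset.mul_sum]
        rw [Finset.sum_comm]
        refine Finset.sum_congr rfl fun y _ => ?_
        rw [Finset.sum_comm]
        refine Finset.sum_congr rfl fun z _ => Finset.sum_congr rfl fun x _ => ?_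
        ring
    _ = _ := by
        simp only [sum_wt, fhat_mul_conj_fhat_neg, Finset.mul_sum, Finset.sum_div, Finset.sum_mul]
        symm
        rw [Finset.sum_comm]
        refine Finset.sum_congr rfl fun y _ => ?_
        rw [Finset.sum_comm]
        refine Finset.sum_congr rfl fun z _ => Finset.sum_congr rfl fun α _ => ?_
        ring

/-- For unimodular `g`, `E[g(y)·conj(g(z))]` equals the sum over `α` with all block sums `≡ 0`
of `ĝ(α)·conj(ĝ(−α))·(−1/2)^{#α}`. -/
theorem stmt9 (K d : ℕ) (hK : 0 < K) (hd : 1 ≤ d)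
    (g : (Fin K × Fin d → ZMod 3) → ℂ) (hg : ∀ y, ‖g y‖ = 1) :
    ∑ x : Fin K → ZMod 3, ∑ y : Fin K × Fin d → ZMod 3, ∑ z : Fin K × Fin d → ZMod 3,
        (wt x y z : ℂ) * g y * (starRingEnd ℂ) (g z)
      = ∑ α ∈ univ.filter (fun α : Fin K × Fin d → ZMod 3 => ∀ i, (∑ j, α (i, j)) = 0),
          fhat g α * (starRingEnd ℂ) (fhat g (-α)) * (-(1 : ℂ)/2) ^ nsupp α :=
  stmt9_general K d g
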